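/- Let L be a positive integer, H a real L×L matrix, P > 0 a real number, and a ∈ ℝ^L. Define F = H Hᵀ + (1/P)·I_L, b* = F⁻¹ H a, and Q = I_L − Hᵀ F⁻¹ H. Then (1/P)·‖b*‖² + ‖Hᵀ b* − a‖² = aᵀ Q a; equivalently, ‖b*‖² + P·‖Hᵀ b* − a‖² = P · (aᵀ Q a). -/

import Mathlib

open Matrix

/-! Write `F = H Hᵀ + c I` and let `b` solve `F b = H a`. Pairing this normal equation with `b`
gives `c ‖b‖² + ‖Hᵀ b‖² = ⟨b, H a⟩ = ⟨a, Hᵀ b⟩`, so expanding `‖Hᵀ b − a‖²` collapses the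
objective `c ‖b‖² + ‖Hᵀ b − a‖²` to `‖a‖² − ⟨a, Hᵀ b⟩`. For `c = 1/P > 0` the matrix `F` is
positive definite, `b = F⁻¹ H a`, and `‖a‖² − ⟨a, Hᵀ F⁻¹ H a⟩` is exactly `aᵀ Q a`. -/

variable {m n : Type*} [Fintype m] [Fintype n]

theorem Matrix.posDef_mul_transpose_add_smul_one [DecidableEq m] (H : Matrix m n ℝ) {c : ℝ}
    (hc : 0 < c) : (H * Hᵀ + c • (1 : Matrix m m ℝ)).PosDef :=
  (PosDef.one.smul hc).posSemidef_add (by simpa using posSemidef_self_mul_conjTranspose H)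

theorem Matrix.ridge_objective_eq_of_normal_eq [DecidableEq m] (H : Matrix m n ℝ) (c : ℝ)
    {a : n → ℝ} {b : m → ℝ} (hb : (H * Hᵀ + c • (1 : Matrix m m ℝ)) *ᵥ b = H *ᵥ a) :
    c * (b ⬝ᵥ b) + (Hᵀ *ᵥ b - a) ⬝ᵥ (Hᵀ *ᵥ b - a) = a ⬝ᵥ a - a ⬝ᵥ (Hᵀ *ᵥ b) := by
  have pairing : (Hᵀ *ᵥ b) ⬝ᵥ (Hᵀ *ᵥ b) + c * (b ⬝ᵥ b) = a ⬝ᵥ (Hᵀ *ᵥ b) := by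
    have := congrArg (b ⬝ᵥ ·) hb
    simp only [add_mulVec, smul_mulVec, one_mulVec, ← mulVec_mulVec, dotProduct_add,
      dotProduct_smul, smul_eq_mul] at this
    rwa [dotProduct_mulVec, dotProduct_mulVec b H a, ← mulVec_transpose,
      dotProduct_comm _ a] at this
  rw [sub_dotProduct, dotProduct_sub, dotProduct_sub, dotProduct_comm (Hᵀ *ᵥ b) a]
  linarith

theorem if_rate_quadratic_form_general (L : ℕ)
    (H : Matrix (Fin L) (Fin L) ℝ) (P : ℝ) (hP : 0 < P) (a : Fin L → ℝ) :
    let F : Matrix (Fin L) (Fin L) ℝ := H * Hᵀ + (1 / P) • (1 : Matrix (Fin L) (Fin L) ℝ)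
    let bstar : Fin L → ℝ := F⁻¹ *ᵥ (H *ᵥ a)
    let Q : Matrix (Fin L) (Fin L) ℝ := 1 - Hᵀ * F⁻¹ * H
    (1 / P) * (bstar ⬝ᵥ bstar) + (Hᵀ *ᵥ bstar - a) ⬝ᵥ (Hᵀ *ᵥ bstar - a) = a ⬝ᵥ (Q *ᵥ a)
    ∧ (bstar ⬝ᵥ bstar) + P * ((Hᵀ *ᵥ bstar - a) ⬝ᵥ (Hᵀ *ᵥ bstar - a)) = P * (a ⬝ᵥ (Q *ᵥ a)) := by
  intro F bstar Q
  have hF : IsUnit F.det :=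
    (isUnit_iff_isUnit_det F).mp (posDef_mul_transpose_add_smul_one H (by positivity)).isUnit
  have normal_eq : F *ᵥ bstar = H *ᵥ a := by
    rw [mulVec_mulVec, mul_nonsing_inv F hF, one_mulVec]
  have hQ : a ⬝ᵥ (Q *ᵥ a) = a ⬝ᵥ a - a ⬝ᵥ (Hᵀ *ᵥ bstar) := by
    simp only [Q, bstar, sub_mulVec, one_mulVec, dotProduct_sub, mulVec_mulVec, Matrix.mul_assoc]
  have objective := ridge_objective_eq_of_normal_eq H (1 / P) normal_eq
  refine ⟨objective.trans hQ.symm, ?_⟩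
  rw [hQ, ← objective, mul_add, ← mul_assoc, mul_one_div_cancel hP.ne', one_mul]

/-- At the optimal projection `b* = F⁻¹ H a` with `F = H Hᵀ + P⁻¹ I`, the objective value
equals the quadratic form of `Q = I − Hᵀ F⁻¹ H`:
`(1/P)‖b*‖² + ‖Hᵀ b* − a‖² = aᵀ Q a`, equivalently `‖b*‖² + P‖Hᵀ b* − a‖² = P (aᵀ Q a)`. -/
theorem if_rate_quadratic_form (L : ℕ) (hL : 0 < L)
    (H : Matrix (Fin L) (Fin L) ℝ) (P : ℝ) (hP : 0 < P) (a : Fin L → ℝ) :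
    let F : Matrix (Fin L) (Fin L) ℝ := H * Hᵀ + (1 / P) • (1 : Matrix (Fin L) (Fin L) ℝ)
    let bstar : Fin L → ℝ := F⁻¹ *ᵥ (H *ᵥ a)
    let Q : Matrix (Fin L) (Fin L) ℝ := 1 - Hᵀ * F⁻¹ * H
    (1 / P) * (bstar ⬝ᵥ bstar) + (Hᵀ *ᵥ bstar - a) ⬝ᵥ (Hᵀ *ᵥ bstar - a) = a ⬝ᵥ (Q *ᵥ a)
    ∧ (bstar ⬝ᵥ bstar) + P * ((Hᵀ *ᵥ bstar - a) ⬝ᵥ (Hᵀ *ᵥ bstar - a)) = P * (a ⬝ᵥ (Q *ᵥ a)) :=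
  if_rate_quadratic_form_general L H P hP a
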